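/- Let p be prime, χ a nontrivial multiplicative character of F_p, and A, B, C, D ⊆ F_p^* of cardinalities A, B, C, D with weights bounded by 1. Then |∑_{a,b,c,d} α_a β_{b,c,d} χ(a+b+cd)| ≤ sqrt( I(B,C,D) · A · p ), where I(B,C,D) is the number of solutions to b₁+c₁d₁ = b₂+c₂d₂ in (B×C×D)². -/

import Mathlib

/-!
Group the inner variables by the value `x = b + c * d`: the sum becomes `∑ₓ g(x) f(x)` with
`f(x) = ∑ₐ αₐ χ(a + x)` and `|g(x)|` at most the number of representations of `x`. By
Cauchy–Schwarz it is at most `√I · (∑ₓ |f(x)|²)^{1/2}`, and orthogonality of the shifted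
character (a Jacobi sum) gives `∑ₓ |f(x)|² = p ∑ₐ |αₐ|² - |∑ₐ αₐ|² ≤ |A| p`.
-/

open Finset

namespace Finset

variable {ι κ : Type*} [Fintype κ] [DecidableEq κ]

lemma sum_sq_card_fiberwise_eq_card_filter (T : Finset ι) (E : ι → κ) :
    ∑ x, #{t ∈ T | E t = x} ^ 2 = #{q ∈ T ×ˢ T | E q.1 = E q.2} := by
  rw [card_eq_sum_card_fiberwise (f := fun q => E q.1) (t := univ)
    fun _ _ => mem_coe.2 (mem_univ _)]
  refine sum_congr rfl fun x _ => ?_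
  rw [sq, ← card_product]
  congr 1
  ext ⟨s, t⟩
  simp only [mem_product, mem_filter]
  grind

lemma norm_sum_mul_comp_le {R : Type*} [SeminormedRing R] (T : Finset ι) (E : ι → κ)
    {β : ι → R} (hβ : ∀ t ∈ T, ‖β t‖ ≤ 1) (f : κ → R) :
    ‖∑ t ∈ T, β t * f (E t)‖ ≤
      √(#{q ∈ T ×ˢ T | E q.1 = E q.2} : ℝ) * √(∑ x, ‖f x‖ ^ 2) := by
  have hfiber (x : κ) : ‖∑ t ∈ T with E t = x, β t‖ ≤ #{t ∈ T | E t = x} := by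
    simpa using norm_sum_le_of_le _ fun t ht => hβ t (mem_filter.1 ht).1
  calc ‖∑ t ∈ T, β t * f (E t)‖
      = ‖∑ x, (∑ t ∈ T with E t = x, β t) * f x‖ := by
        rw [← sum_fiberwise T E]
        simp_rw [sum_mul]
        congr 1
        exact sum_congr rfl fun x _ => sum_congr rfl fun t ht => by rw [(mem_filter.1 ht).2]
    _ ≤ ∑ x, (#{t ∈ T | E t = x} : ℝ) * ‖f x‖ :=
        (norm_sum_le _ _).trans <| sum_le_sum fun x _ =>
          (norm_mul_le _ _).trans <| mul_le_mul_of_nonneg_right (hfiber x) (norm_nonneg _)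
    _ ≤ √(∑ x, (#{t ∈ T | E t = x} : ℝ) ^ 2) * √(∑ x, ‖f x‖ ^ 2) :=
        Real.sum_mul_le_sqrt_mul_sqrt _ _ _
    _ = _ := by rw [← sum_sq_card_fiberwise_eq_card_filter]; push_cast; rfl

end Finset

namespace MulChar

variable {F : Type*} [Field F] [Fintype F] {χ : MulChar F ℂ}

lemma sum_apply_add_mul_inv_apply (hχ : χ ≠ 1) {t : F} (ht : t ≠ 0) :
    ∑ x, χ (t + x) * χ⁻¹ x = -1 := by
  have hunit : χ t * χ⁻¹ t = 1 := by
    rw [← mul_apply, mul_inv_cancel, one_apply ht.isUnit]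
  -- the substitution `x = -t * y` turns the sum into `χ⁻¹ (-1)` times a Jacobi sum
  have hsubst (y : F) : χ (t + -t * y) * χ⁻¹ (-t * y) = χ⁻¹ (-1) * (χ⁻¹ y * χ (1 - y)) := by
    rw [show t + -t * y = t * (1 - y) by ring, show -t * y = -1 * t * y by ring,
      map_mul, map_mul, map_mul]
    linear_combination (χ⁻¹ (-1) * χ⁻¹ y * χ (1 - y)) * hunit
  have hjacobi := jacobiSum_nontrivial_inv (inv_ne_one.2 hχ)
  rw [inv_inv] at hjacobi
  rw [← Equiv.sum_comp (Equiv.mulLeft₀ (-t) (neg_ne_zero.2 ht))]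
  simp only [Equiv.mulLeft₀_apply]
  rw [sum_congr rfl fun y _ => hsubst y, ← mul_sum, ← jacobiSum, hjacobi, mul_neg, ← map_mul,
    neg_one_mul, neg_neg, map_one]

lemma sum_apply_add_mul_inv_apply_add [DecidableEq F] (hχ : χ ≠ 1) (a b : F) :
    ∑ x, χ (a + x) * χ⁻¹ (b + x) = (if a = b then (Fintype.card F : ℂ) else 0) - 1 := by
  split_ifs with hab
  · subst hab
    simp_rw [← mul_apply, mul_inv_cancel]
    rw [show ∑ x, (1 : MulChar F ℂ) (a + x) = ∑ x, (1 : MulChar F ℂ) x from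
      Equiv.sum_comp (Equiv.addLeft a) _, sum_one_eq_card_units,
      Fintype.card_units, Nat.cast_sub Fintype.card_pos, Nat.cast_one]
  · rw [zero_sub, ← sum_apply_add_mul_inv_apply hχ (sub_ne_zero.2 hab),
      ← Equiv.sum_comp (Equiv.addLeft b) (fun y => χ (a - b + y) * χ⁻¹ y)]
    simp only [Equiv.coe_addLeft, ← add_assoc, sub_add_cancel]

lemma sum_norm_sq_sum_mul_apply_add (hχ : χ ≠ 1) (A : Finset F) (α : F → ℂ) :
    ∑ x, ‖∑ a ∈ A, α a * χ (a + x)‖ ^ 2 =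
      Fintype.card F * ∑ a ∈ A, ‖α a‖ ^ 2 - ‖∑ a ∈ A, α a‖ ^ 2 := by
  classical
  apply Complex.ofReal_injective
  push_cast
  simp only [← Complex.mul_conj', map_sum, map_mul, starRingEnd_apply, star_apply']
  calc ∑ x, (∑ a ∈ A, α a * χ (a + x)) * ∑ b ∈ A, star (α b) * χ⁻¹ (b + x)
      = ∑ a ∈ A, ∑ b ∈ A, α a * star (α b) * ∑ x, χ (a + x) * χ⁻¹ (b + x) := by
        simp_rw [sum_mul_sum, mul_sum]
        rw [sum_comm]
        refine sum_congr rfl fun a _ => ?_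
        rw [sum_comm]
        exact sum_congr rfl fun b _ => sum_congr rfl fun x _ => by ring
    _ = ∑ a ∈ A, ∑ b ∈ A,
          (Fintype.card F * (if a = b then α a * star (α b) else 0) - α a * star (α b)) := by
        simp only [sum_apply_add_mul_inv_apply_add hχ]
        refine sum_congr rfl fun a _ => sum_congr rfl fun b _ => ?_
        split_ifs <;> ring
    _ = _ := by
        simp only [sum_sub_distrib, ← mul_sum, sum_ite_eq, sum_ite_mem, inter_self, sum_mul_sum]

lemma sum_norm_sq_sum_mul_apply_add_le (hχ : χ ≠ 1) {A : Finset F} {α : F → ℂ}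
    (hα : ∀ a ∈ A, ‖α a‖ ≤ 1) :
    ∑ x, ‖∑ a ∈ A, α a * χ (a + x)‖ ^ 2 ≤ #A * Fintype.card F := by
  have hα_sq : ∑ a ∈ A, ‖α a‖ ^ 2 ≤ #A := by
    simpa using sum_le_sum fun a ha => pow_le_one₀ (norm_nonneg _) (hα a ha)
  rw [sum_norm_sq_sum_mul_apply_add hχ, mul_comm (#A : ℝ)]
  calc _ ≤ (Fintype.card F : ℝ) * ∑ a ∈ A, ‖α a‖ ^ 2 := sub_le_self _ (by positivity)
    _ ≤ _ := by gcongr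

end MulChar

theorem stmt7_general {p : ℕ} [Fact p.Prime] (χ : MulChar (ZMod p) ℂ) (hχ : χ ≠ 1)
    (A B C D : Finset (ZMod p))
    (α : ZMod p → ℂ) (β : ZMod p → ZMod p → ZMod p → ℂ)
    (hα : ∀ a ∈ A, ‖α a‖ ≤ 1)
    (hβ : ∀ b ∈ B, ∀ c ∈ C, ∀ d ∈ D, ‖β b c d‖ ≤ 1) :
    ‖∑ a ∈ A, ∑ b ∈ B, ∑ c ∈ C, ∑ d ∈ D,
        α a * β b c d * χ (a + b + c * d)‖ ≤
      Real.sqrt (((((B ×ˢ C ×ˢ D) ×ˢ (B ×ˢ C ×ˢ D)).filter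
          (fun t => t.1.1 + t.1.2.1 * t.1.2.2 = t.2.1 + t.2.2.1 * t.2.2.2)).card : ℝ) *
        A.card * p) := by
  set f : ZMod p → ℂ := fun x => ∑ a ∈ A, α a * χ (a + x)
  have hsum : ∑ a ∈ A, ∑ b ∈ B, ∑ c ∈ C, ∑ d ∈ D, α a * β b c d * χ (a + b + c * d) =
      ∑ t ∈ B ×ˢ C ×ˢ D, β t.1 t.2.1 t.2.2 * f (t.1 + t.2.1 * t.2.2) := by
    calc _ = ∑ a ∈ A, ∑ t ∈ B ×ˢ C ×ˢ D,
          α a * β t.1 t.2.1 t.2.2 * χ (a + (t.1 + t.2.1 * t.2.2)) := by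
          simp only [sum_product, add_assoc]
      _ = _ := by
          rw [sum_comm]
          simp only [f, mul_sum]
          exact sum_congr rfl fun t _ => sum_congr rfl fun a _ => by ring
  have hβ' : ∀ t ∈ B ×ˢ C ×ˢ D, ‖β t.1 t.2.1 t.2.2‖ ≤ 1 := fun t ht => by
    simp only [mem_product] at ht
    exact hβ _ ht.1 _ ht.2.1 _ ht.2.2
  rw [hsum, mul_assoc, Real.sqrt_mul (Nat.cast_nonneg _)]
  refine (norm_sum_mul_comp_le _ _ hβ' f).trans ?_
  gcongr
  simpa [ZMod.card] using MulChar.sum_norm_sq_sum_mul_apply_add_le hχ hα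

theorem stmt7 {p : ℕ} [Fact p.Prime] (χ : MulChar (ZMod p) ℂ) (hχ : χ ≠ 1)
    (A B C D : Finset (ZMod p)) (hA : (0 : ZMod p) ∉ A) (hB : (0 : ZMod p) ∉ B)
    (hC : (0 : ZMod p) ∉ C) (hD : (0 : ZMod p) ∉ D)
    (α : ZMod p → ℂ) (β : ZMod p → ZMod p → ZMod p → ℂ)
    (hα : ∀ a ∈ A, ‖α a‖ ≤ 1)
    (hβ : ∀ b ∈ B, ∀ c ∈ C, ∀ d ∈ D, ‖β b c d‖ ≤ 1) :
    ‖∑ a ∈ A, ∑ b ∈ B, ∑ c ∈ C, ∑ d ∈ D,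
        α a * β b c d * χ (a + b + c * d)‖ ≤
      Real.sqrt (((((B ×ˢ C ×ˢ D) ×ˢ (B ×ˢ C ×ˢ D)).filter
          (fun t => t.1.1 + t.1.2.1 * t.1.2.2 = t.2.1 + t.2.2.1 * t.2.2.2)).card : ℝ) *
        A.card * p) :=
  stmt7_general χ hχ A B C D α β hα hβ
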